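/- Let α > 0, s > 0, B ≥ 0, and let β : [0,∞) → ℝ be continuous with 0 ≤ β(t) ≤ B for all t. Define the saturation function sat(x) = max(−s, min(s, x)). If v : [0,∞) → ℝ is differentiable and satisfies v'(t) = β(t)·(1 − exp(v(t))) − sat(α·v(t)) for all t ≥ 0, then t ↦ |v(t)| is nonincreasing and v(t) → 0 as t → ∞. -/

import Mathlib

/-!
`v ^ 2` is a strict Lyapunov function. The exponential term pushes `v` toward `0` because
`x (1 - eˣ) ≤ 0`, and the saturated feedback gives `x · sat (α x) = |x| · min s (α |x|)`. Hence
`(v ^ 2)' = 2 v v' ≤ 0`, so `|v|` is nonincreasing. While `|v| ≥ ε` the derivative of `v ^ 2`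
is at most `-2 ε min s (α ε)`, so `v ^ 2` would become negative in finite time; thus `|v|`
drops below every `ε > 0`.
-/

open Set Filter Topology Real

lemma antitoneOn_of_hasDerivAt_nonpos {D : Set ℝ} (hD : Convex ℝ D) {f f' : ℝ → ℝ}
    (hf : ∀ x ∈ D, HasDerivAt f (f' x) x) (hf' : ∀ x ∈ D, f' x ≤ 0) : AntitoneOn f D :=
  antitoneOn_of_hasDerivWithinAt_nonpos hD
    (fun x hx => (hf x hx).continuousAt.continuousWithinAt)
    (fun x hx => (hf x (interior_subset hx)).hasDerivWithinAt)
    (fun x hx => hf' x (interior_subset hx))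

section Lyapunov

variable {v v' : ℝ → ℝ} (hv : ∀ t ∈ Ici (0 : ℝ), HasDerivAt v (v' t) t)
include hv

lemma antitoneOn_sq_add_mul_of_mul_deriv_le {δ : ℝ} (h : ∀ t ∈ Ici (0 : ℝ), v t * v' t ≤ -δ) :
    AntitoneOn (fun t => v t ^ 2 + 2 * δ * t) (Ici 0) := by
  refine antitoneOn_of_hasDerivAt_nonpos (convex_Ici 0) (f' := fun t => 2 * v t * v' t + 2 * δ)
    (fun t ht => ?_) (fun t ht => by linarith [h t ht])
  exact (((hv t ht).fun_pow 2).fun_add ((hasDerivAt_id' t).const_mul (2 * δ))).congr_deriv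
    (by simp)

lemma antitoneOn_abs_of_mul_deriv_nonpos (h : ∀ t ∈ Ici (0 : ℝ), v t * v' t ≤ 0) :
    AntitoneOn (fun t => |v t|) (Ici 0) := by
  intro a ha b hb hab
  have := antitoneOn_sq_add_mul_of_mul_deriv_le hv (δ := 0) (by simpa using h) ha hb hab
  simpa [sq_le_sq] using this

lemma tendsto_zero_of_mul_deriv_le (h : ∀ t ∈ Ici (0 : ℝ), v t * v' t ≤ 0)
    (hε : ∀ ε > 0, ∃ δ > 0, ∀ t ∈ Ici (0 : ℝ), ε ≤ |v t| → v t * v' t ≤ -δ) :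
    Tendsto v atTop (𝓝 0) := by
  have hanti := antitoneOn_abs_of_mul_deriv_nonpos hv h
  rw [Metric.tendsto_atTop]
  intro ε ε_pos
  suffices ∃ T ∈ Ici (0 : ℝ), |v T| < ε by
    obtain ⟨T, hT, hvT⟩ := this
    refine ⟨T, fun t ht => ?_⟩
    rw [Real.dist_eq, sub_zero]
    exact (hanti hT (mem_Ici.2 (le_trans hT ht)) ht).trans_lt hvT
  by_contra! hfar
  obtain ⟨δ, δ_pos, hδ⟩ := hε ε ε_pos
  have hdecay := antitoneOn_sq_add_mul_of_mul_deriv_le hv (fun t ht => hδ t ht (hfar t ht))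
  set T := v 0 ^ 2 / δ
  have hT : T ∈ Ici (0 : ℝ) := div_nonneg (sq_nonneg _) δ_pos.le
  have hδT : δ * T = v 0 ^ 2 := mul_div_cancel₀ _ δ_pos.ne'
  have hle := hdecay (mem_Ici.2 le_rfl) hT hT
  have hεT : ε ^ 2 ≤ v T ^ 2 := sq_le_sq.2 (by simpa [abs_of_pos ε_pos] using hfar T hT)
  simp only [mul_zero, add_zero] at hle
  nlinarith [sq_nonneg (v 0)]

end Lyapunov

lemma mul_one_sub_exp_nonpos (x : ℝ) : x * (1 - exp x) ≤ 0 := by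
  rcases le_total 0 x with hx | hx
  · exact mul_nonpos_of_nonneg_of_nonpos hx (sub_nonpos.2 (one_le_exp hx))
  · exact mul_nonpos_of_nonpos_of_nonneg hx (sub_nonneg.2 (exp_le_one_iff.2 hx))

lemma mul_max_neg_min_eq {s : ℝ} (hs : 0 ≤ s) (x : ℝ) :
    x * max (-s) (min s x) = |x| * min s |x| := by
  rcases le_total 0 x with hx | hx
  · rw [abs_of_nonneg hx, max_eq_right (by linarith [le_min hs hx])]
  · rw [abs_of_nonpos hx, min_eq_right (hx.trans hs), ← neg_neg x, max_neg_neg, neg_neg]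
    ring

lemma mul_sub_max_neg_min_le {α s b : ℝ} (hα : 0 < α) (hs : 0 ≤ s) (hb : 0 ≤ b) (x : ℝ) :
    x * (b * (1 - exp x) - max (-s) (min s (α * x))) ≤ -(|x| * min s (α * |x|)) := by
  have hexp : x * (b * (1 - exp x)) ≤ 0 := by
    rw [mul_left_comm]; exact mul_nonpos_of_nonneg_of_nonpos hb (mul_one_sub_exp_nonpos x)
  have hsat : x * max (-s) (min s (α * x)) = |x| * min s (α * |x|) := by
    have := mul_max_neg_min_eq hs (α * x)
    rw [abs_mul, abs_of_pos hα, mul_assoc, mul_assoc] at this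
    exact mul_left_cancel₀ hα.ne' this
  rw [mul_sub, hsat]
  linarith

theorem stmt_17_general (α s B : ℝ) (hα : 0 < α) (hs : 0 < s)
    (β v : ℝ → ℝ)
    (hβ : ∀ t, 0 ≤ t → 0 ≤ β t ∧ β t ≤ B)
    (sat : ℝ → ℝ) (hsat : ∀ x, sat x = max (-s) (min s x))
    (hv : ∀ t, 0 ≤ t →
      HasDerivAt v (β t * (1 - Real.exp (v t)) - sat (α * v t)) t) :
    AntitoneOn (fun t => |v t|) (Set.Ici 0) ∧
      Filter.Tendsto v Filter.atTop (nhds 0) := by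
  have hdecay (t : ℝ) (ht : t ∈ Ici (0 : ℝ)) :
      v t * (β t * (1 - exp (v t)) - sat (α * v t)) ≤ -(|v t| * min s (α * |v t|)) := by
    rw [hsat]; exact mul_sub_max_neg_min_le hα hs.le (hβ t ht).1 (v t)
  have hnonpos (t : ℝ) (ht : t ∈ Ici (0 : ℝ)) :
      v t * (β t * (1 - exp (v t)) - sat (α * v t)) ≤ 0 :=
    (hdecay t ht).trans (neg_nonpos.2 (mul_nonneg (abs_nonneg _) (le_min hs.le (by positivity))))
  refine ⟨antitoneOn_abs_of_mul_deriv_nonpos hv hnonpos, tendsto_zero_of_mul_deriv_le hv hnonpos ?_⟩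
  intro ε ε_pos
  refine ⟨ε * min s (α * ε), mul_pos ε_pos (lt_min hs (mul_pos hα ε_pos)), fun t ht hεt => ?_⟩
  refine (hdecay t ht).trans (neg_le_neg ?_)
  exact mul_le_mul hεt (min_le_min_left s (by gcongr)) (le_min hs.le (by positivity)) (abs_nonneg _)

/-- Reduced scalar form of the tracking result (Theorem 5.4) with vanished
delay state: the logarithmic tracking error `v` obeying
`v' = β(t)(1 - e^v) - sat(α v)` with `β` continuous, nonnegative and bounded,
has `|v|` nonincreasing and `v(t) → 0`. -/
theorem stmt_17 (α s B : ℝ) (hα : 0 < α) (hs : 0 < s) (hB : 0 ≤ B)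
    (β v : ℝ → ℝ)
    (hβc : ContinuousOn β (Set.Ici 0))
    (hβ : ∀ t, 0 ≤ t → 0 ≤ β t ∧ β t ≤ B)
    (sat : ℝ → ℝ) (hsat : ∀ x, sat x = max (-s) (min s x))
    (hv : ∀ t, 0 ≤ t →
      HasDerivAt v (β t * (1 - Real.exp (v t)) - sat (α * v t)) t) :
    AntitoneOn (fun t => |v t|) (Set.Ici 0) ∧
      Filter.Tendsto v Filter.atTop (nhds 0) :=
  stmt_17_general α s B hα hs β v hβ sat hsat hv
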